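/- The limit as T → ∞ of (1/T³)·∫₁^{T} 8π²·x·T·√((4T² + x²)/(T² + x²)) dx equals 2π²·(2√10 − 3·log 3 + 6·artanh(√(2/5)) − 4), where artanh is the real inverse hyperbolic tangent. -/

import Mathlib

open Real Filter

/-- The real inverse hyperbolic tangent, `artanh x = (1/2) * log ((1 + x) / (1 - x))`. -/
noncomputable def artanh (x : ℝ) : ℝ := (1 / 2) * Real.log ((1 + x) / (1 - x))

/-- Antiderivative (in `x`, up to the factor `4π²T`) of the integrand. -/
noncomputable def Hfun (T x : ℝ) : ℝ :=
  Real.sqrt ((x^2+T^2)*(x^2+4*T^2)) +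
    (3*T^2/2) * Real.log (x^2 + 5*T^2/2 + Real.sqrt ((x^2+T^2)*(x^2+4*T^2)))

theorem hasDerivAt_Hfun (T : ℝ) (hT : 0 < T) (x : ℝ) :
    HasDerivAt (Hfun T) (2*x*Real.sqrt ((x^2+4*T^2)/(x^2+T^2))) x := by
  have h1 : (0:ℝ) < x^2+T^2 := by positivity
  have h2 : (0:ℝ) < x^2+4*T^2 := by positivity
  have hP : (0:ℝ) < (x^2+T^2)*(x^2+4*T^2) := mul_pos h1 h2
  have hPd : HasDerivAt (fun x : ℝ => (x^2+T^2)*(x^2+4*T^2))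
      (2*x*(x^2+4*T^2) + (x^2+T^2)*(2*x)) x := by
    have := ((hasDerivAt_pow 2 x).add_const (T^2)).mul
      ((hasDerivAt_pow 2 x).add_const (4*T^2))
    simpa [mul_comm, Pi.mul_def] using this
  have hs : HasDerivAt (fun x : ℝ => Real.sqrt ((x^2+T^2)*(x^2+4*T^2)))
      ((2*x*(x^2+4*T^2) + (x^2+T^2)*(2*x)) / (2 * Real.sqrt ((x^2+T^2)*(x^2+4*T^2)))) x :=
    hPd.sqrt hP.ne'
  have hsqP : (0:ℝ) < Real.sqrt ((x^2+T^2)*(x^2+4*T^2)) := Real.sqrt_pos.mpr hP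
  have hL : (0:ℝ) < x^2 + 5*T^2/2 + Real.sqrt ((x^2+T^2)*(x^2+4*T^2)) := by positivity
  have hLd : HasDerivAt (fun x : ℝ => x^2 + 5*T^2/2 + Real.sqrt ((x^2+T^2)*(x^2+4*T^2)))
      (2*x + (2*x*(x^2+4*T^2) + (x^2+T^2)*(2*x)) / (2 * Real.sqrt ((x^2+T^2)*(x^2+4*T^2)))) x := by
    have := (((hasDerivAt_pow 2 x).add_const (5*T^2/2)).add hs)
    simpa [Pi.add_def] using this
  have hlog := hLd.log hL.ne'
  have hH := hs.add (hlog.const_mul (3*T^2/2))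
  refine hH.congr_deriv (Eq.symm ?_)
  set s₁ := Real.sqrt (x^2+T^2) with hs₁def
  set s₂ := Real.sqrt (x^2+4*T^2) with hs₂def
  have hs₁ : s₁^2 = x^2+T^2 := Real.sq_sqrt h1.le
  have hs₂ : s₂^2 = x^2+4*T^2 := Real.sq_sqrt h2.le
  have hs₁p : 0 < s₁ := Real.sqrt_pos.mpr h1
  have hs₂p : 0 < s₂ := Real.sqrt_pos.mpr h2
  have hsplit : Real.sqrt ((x^2+T^2)*(x^2+4*T^2)) = s₁ * s₂ := Real.sqrt_mul h1.le _
  have hdiv : Real.sqrt ((x^2+4*T^2)/(x^2+T^2)) = s₂ / s₁ := Real.sqrt_div' _ h1.le ▸ by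
    rw [Real.sqrt_div h2.le]
  rw [hsplit, hdiv]
  have hLpos : (0:ℝ) < x^2 + 5*T^2/2 + s₁*s₂ := by positivity
  have e1 : x^2 + 5*T^2/2 = (s₁^2+s₂^2)/2 := by rw [hs₁, hs₂]; ring
  have e2 : (3:ℝ)*T^2/2 = (s₂^2-s₁^2)/2 := by rw [hs₁, hs₂]; ring
  rw [e1, e2, ← hs₁, ← hs₂]
  have hd : ((s₁^2+s₂^2)/2 + s₁*s₂) ≠ 0 := by positivity
  field_simp
  ring

theorem integral_eq_Hfun (T : ℝ) (hT : 1 ≤ T) :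
    (∫ x in (1:ℝ)..T, 8 * Real.pi ^ 2 * x * T * Real.sqrt ((4 * T ^ 2 + x ^ 2) / (T ^ 2 + x ^ 2)))
      = 4 * Real.pi ^ 2 * T * (Hfun T T - Hfun T 1) := by
  have hT0 : (0:ℝ) < T := lt_of_lt_of_le one_pos hT
  have hcont : Continuous (fun x : ℝ =>
      8 * Real.pi ^ 2 * x * T * Real.sqrt ((4 * T ^ 2 + x ^ 2) / (T ^ 2 + x ^ 2))) := by
    apply Continuous.mul (by continuity)
    exact Real.continuous_sqrt.comp
      (Continuous.div (by continuity) (by continuity) (fun x => by positivity))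
  have := intervalIntegral.integral_eq_sub_of_hasDerivAt
    (f := fun x => 4 * Real.pi ^ 2 * T * Hfun T x)
    (f' := fun x => 8 * Real.pi ^ 2 * x * T * Real.sqrt ((4 * T ^ 2 + x ^ 2) / (T ^ 2 + x ^ 2)))
    (a := 1) (b := T)
    (fun x _ => by
      have h := (hasDerivAt_Hfun T hT0 x).const_mul (4 * Real.pi ^ 2 * T)
      have harg : (4 * T ^ 2 + x ^ 2) / (T ^ 2 + x ^ 2) = (x^2+4*T^2)/(x^2+T^2) := by ring
      show HasDerivAt (fun x => 4 * Real.pi ^ 2 * T * Hfun T x)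
        (8 * Real.pi ^ 2 * x * T * Real.sqrt ((4 * T ^ 2 + x ^ 2) / (T ^ 2 + x ^ 2))) x
      rw [harg]
      refine h.congr_deriv ?_
      ring)
    (hcont.intervalIntegrable 1 T)
  rw [this]; ring

/-- The limit function, as a function of `u = 1/T²`. -/
noncomputable def phi (u : ℝ) : ℝ :=
  4 * Real.pi ^ 2 * (Real.sqrt 10 - Real.sqrt ((u+1)*(u+4)) +
    3/2 * Real.log ((7/2 + Real.sqrt 10) / (u + 5/2 + Real.sqrt ((u+1)*(u+4)))))

theorem ratio_eq_phi (T : ℝ) (hT : 1 ≤ T) :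
    (1 / T ^ 3) * (4 * Real.pi ^ 2 * T * (Hfun T T - Hfun T 1)) = phi (1/T^2) := by
  have hT0 : (0:ℝ) < T := lt_of_lt_of_le one_pos hT
  have hA : (0:ℝ) < (1+T^2)*(1+4*T^2) := by positivity
  set sA := Real.sqrt ((1+T^2)*(1+4*T^2)) with hsAdef
  have hsA : 0 < sA := Real.sqrt_pos.mpr hA
  have hHT : Hfun T T = Real.sqrt 10 * T^2 +
      3*T^2/2 * Real.log ((7/2 + Real.sqrt 10) * T^2) := by
    have h1 : (T^2+T^2)*(T^2+4*T^2) = (Real.sqrt 10 * T^2)^2 := by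
      rw [mul_pow, Real.sq_sqrt (by norm_num : (0:ℝ) ≤ 10)]; ring
    have h2 : Real.sqrt ((T^2+T^2)*(T^2+4*T^2)) = Real.sqrt 10 * T^2 := by
      rw [h1, Real.sqrt_sq (by positivity)]
    rw [Hfun, h2]
    congr 2
    ring
  have hH1 : Hfun T 1 = sA + 3*T^2/2 * Real.log (1 + 5*T^2/2 + sA) := by
    rw [Hfun, hsAdef]
    norm_num
  have fact1 : Real.sqrt ((1/T^2+1)*(1/T^2+4)) = sA / T^2 := by
    have h1 : (1/T^2+1)*(1/T^2+4) = ((1+T^2)*(1+4*T^2))/(T^2)^2 := by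
      field_simp
    rw [h1, Real.sqrt_div hA.le, Real.sqrt_sq (by positivity)]
  have hL : (0:ℝ) < 1 + 5*T^2/2 + sA := by positivity
  have hlogq : Real.log ((7/2 + Real.sqrt 10) / (1/T^2 + 5/2 + sA/T^2))
      = Real.log ((7/2 + Real.sqrt 10) * T^2) - Real.log (1 + 5*T^2/2 + sA) := by
    have h1 : (7/2 + Real.sqrt 10) / (1/T^2 + 5/2 + sA/T^2)
        = ((7/2 + Real.sqrt 10) * T^2) / (1 + 5*T^2/2 + sA) := by
      rw [div_eq_div_iff (by positivity) (by positivity)]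
      field_simp
    rw [h1, Real.log_div (by positivity) (by positivity)]
  rw [hHT, hH1, phi, fact1, hlogq]
  field_simp
  ring

theorem sqrt4 : Real.sqrt ((0+1)*(0+4)) = 2 := by
  norm_num

theorem phi_contAt : ContinuousAt phi 0 := by
  have hs : ContinuousAt (fun u : ℝ => Real.sqrt ((u+1)*(u+4))) 0 :=
    Real.continuous_sqrt.continuousAt.comp (by fun_prop)
  have hden : ContinuousAt (fun u : ℝ => u + 5/2 + Real.sqrt ((u+1)*(u+4))) 0 :=
    ((continuousAt_id.add continuousAt_const).add hs)
  have hden0 : (0:ℝ) + 5/2 + Real.sqrt ((0+1)*(0+4)) ≠ 0 := by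
    rw [sqrt4]; norm_num
  have hq : ContinuousAt (fun u : ℝ =>
      (7/2 + Real.sqrt 10) / (u + 5/2 + Real.sqrt ((u+1)*(u+4)))) 0 :=
    ContinuousAt.div continuousAt_const hden hden0
  have hlog : ContinuousAt (fun u : ℝ =>
      Real.log ((7/2 + Real.sqrt 10) / (u + 5/2 + Real.sqrt ((u+1)*(u+4))))) 0 := by
    apply ContinuousAt.log hq
    rw [sqrt4]
    positivity
  exact (continuousAt_const.mul (((continuousAt_const.sub hs).add
    (continuousAt_const.mul hlog))))

theorem artanh_val : _root_.artanh (Real.sqrt (2/5)) = 1/2 * Real.log ((7+2*Real.sqrt 10)/3) := by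
  have hs : Real.sqrt (2/5) = Real.sqrt 10 / 5 := by
    rw [show (2/5:ℝ) = 10/25 by norm_num, Real.sqrt_div (by norm_num : (0:ℝ) ≤ 10),
      show (25:ℝ) = 5^2 by norm_num, Real.sqrt_sq (by norm_num)]
  have h10 : Real.sqrt 10 ^ 2 = 10 := Real.sq_sqrt (by norm_num)
  have hlt : Real.sqrt 10 < 4 := by
    nlinarith [Real.sqrt_nonneg 10, h10]
  rw [_root_.artanh, hs]
  have harg : (1 + Real.sqrt 10 / 5) / (1 - Real.sqrt 10 / 5) = (7+2*Real.sqrt 10)/3 := by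
    rw [div_eq_div_iff (by nlinarith) (by norm_num)]
    nlinarith [h10]
  rw [harg]

theorem phi_zero : phi 0 = 2 * Real.pi ^ 2 *
    (2 * Real.sqrt 10 - 3 * Real.log 3 + 6 * _root_.artanh (Real.sqrt (2/5)) - 4) := by
  rw [phi, sqrt4, artanh_val]
  have h1 : (7/2 + Real.sqrt 10) / ((0:ℝ) + 5/2 + 2) = ((7+2*Real.sqrt 10)/3)/3 := by ring
  rw [h1, Real.log_div (by positivity) (by norm_num)]
  ring

theorem optimal_length_integral_limit :
    Tendsto
      (fun T : ℝ =>
        (1 / T ^ 3) *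
          ∫ x in (1:ℝ)..T,
            8 * Real.pi ^ 2 * x * T * Real.sqrt ((4 * T ^ 2 + x ^ 2) / (T ^ 2 + x ^ 2)))
      atTop
      (nhds (2 * Real.pi ^ 2 *
        (2 * Real.sqrt 10 - 3 * Real.log 3 + 6 * _root_.artanh (Real.sqrt (2/5)) - 4))) := by
  have htend : Tendsto (fun T : ℝ => 1/T^2) atTop (nhds 0) := by
    have h2 : Tendsto (fun T : ℝ => T^2) atTop atTop :=
      tendsto_pow_atTop (by norm_num)
    simpa [one_div, Pi.inv_def] using h2.inv_tendsto_atTop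
  have h1 : Tendsto (fun T : ℝ => phi (1/T^2)) atTop (nhds (phi 0)) :=
    phi_contAt.tendsto.comp htend
  rw [← phi_zero]
  apply Tendsto.congr' _ h1
  filter_upwards [eventually_ge_atTop (1:ℝ)] with T hT
  rw [← ratio_eq_phi T hT, integral_eq_Hfun T hT]
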